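/- Let K be a perfect field of characteristic 2 and V an n-dimensional vector space over K with n even. Then there are exactly two equivalence classes of non-degenerate symmetric bilinear forms on V: one class consisting of forms whose Gram matrix (in some basis) has at least one nonzero diagonal entry (containing the identity matrix 1_n), and the other consisting of forms with identically zero diagonal (containing the anti-diagonal matrix with 1's). -/

import Mathlib

/-!
In characteristic 2 the map `x ↦ B x x` is additive for symmetric `B`, so a symmetric form is
alternating iff its Gram matrix has zero diagonal; isometries preserve this. Conversely, a
nondegenerate symmetric form has a basis whose Gram matrix is the permutation matrix of
`Sum.swap` (a sum of hyperbolic planes) if it is alternating, and the identity matrix otherwise.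
Both bases are built by splitting off a nondegenerate subspace and recursing into its orthogonal
complement. In the non-alternating case one splits off `e` with `B e e = 1` (square roots exist
since `K` is perfect), chosen so that `e⊥` is again non-alternating: if `x⊥` is alternating and
`u, v ∈ x⊥` satisfy `B u v = B x x`, then `e = x + u` works, as `x + v ⊥ e` and
`B (x + v) (x + v) = B x x`.
-/

open LinearMap (BilinForm)
open Module Submodule

theorem Equiv.permCongr_sumSumSumComm_sumCongr {α γ β : Type*} (e : α ⊕ γ ≃ β) :
    ((Equiv.sumSumSumComm α α γ γ).trans (e.sumCongr e)).permCongr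
      ((Equiv.sumComm α α).sumCongr (Equiv.sumComm γ γ)) = Equiv.sumComm β β := by
  ext (k | k) <;> rcases h : e.symm k with _ | _ <;>
    simp [Equiv.permCongr_apply, h, ← Equiv.eq_symm_apply]

namespace LinearMap.BilinForm

variable {K V : Type*} [Field K] [AddCommGroup V] [Module K V] {B : BilinForm K V} {ι κ : Type*}

theorem mem_orthogonal_span_range_iff {v : ι → V} {y : V} :
    y ∈ B.orthogonal (span K (Set.range v)) ↔ ∀ i, B (v i) y = 0 :=
  ⟨fun h i => h _ (subset_span ⟨i, rfl⟩), fun h _ hz =>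
    span_le.2 (Set.range_subset_iff.2 h : Set.range v ⊆ LinearMap.ker (B.flip y)) hz⟩

theorem exists_apply_eq_one [Nontrivial V] (hnd : B.Nondegenerate) : ∃ x y, B x y = 1 := by
  obtain ⟨x, hx⟩ := exists_ne (0 : V)
  obtain ⟨y, hy⟩ : ∃ y, B x y ≠ 0 := by
    by_contra! h
    exact hx (hnd.1 x h)
  exact ⟨x, (B x y)⁻¹ • y, by rw [map_smul, smul_eq_mul, inv_mul_cancel₀ hy]⟩

theorem IsSymm.isAlt_of_basis [CharP K 2] (hB : B.IsSymm) (b : Basis ι K V)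
    (h : ∀ i, B (b i) (b i) = 0) : B.IsAlt := by
  intro x
  induction b.mem_span x using Submodule.span_induction with
  | mem _ hx => obtain ⟨i, rfl⟩ := hx; exact h i
  | zero => simp
  | add x y _ _ hx hy => simp [hx, hy, hB.eq y x, CharTwo.add_self_eq_zero]
  | smul c x _ hx => simp [hx]

theorem exists_orthogonal_anisotropic_pair [CharP K 2] [FiniteDimensional K V] (hB : B.IsSymm)
    (hnd : B.Nondegenerate) (hV : 2 ≤ finrank K V) {x : V} (hx : B x x ≠ 0) :
    ∃ e y, B e e ≠ 0 ∧ B e y = 0 ∧ B y y ≠ 0 := by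
  by_cases hC : ∃ y ∈ B.orthogonal (K ∙ x), B y y ≠ 0
  · obtain ⟨y, hy, hyy⟩ := hC
    exact ⟨x, y, hx, hy x (mem_span_singleton_self x), hyy⟩
  push Not at hC
  have hx0 : x ≠ 0 := by rintro rfl; simp at hx
  have hxC : ∀ z ∈ B.orthogonal (K ∙ x), B x z = 0 ∧ B z x = 0 := fun z hz =>
    ⟨hz x (mem_span_singleton_self x), hB.eq z x ▸ hz x (mem_span_singleton_self x)⟩
  obtain ⟨u, hu⟩ : ∃ u : B.orthogonal (K ∙ x), u ≠ 0 := by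
    refine (Module.finrank_pos_iff_exists_ne_zero (R := K)).1 ?_
    rw [finrank_orthogonal hnd, finrank_span_singleton hx0]
    omega
  obtain ⟨w, hw⟩ : ∃ w : B.orthogonal (K ∙ x), B u w ≠ 0 := by
    by_contra! h
    exact hu ((restrict_nondegenerate_orthogonal_spanSingleton B hnd hB.isRefl hx).1 u h)
  set v : V := (B x x / B u w) • (w : V)
  have hv : v ∈ B.orthogonal (K ∙ x) := smul_mem _ _ w.2
  have huv : B u v = B x x := by simp [v, div_mul_cancel₀ _ hw]
  refine ⟨x + u, x + v, ?_, ?_, ?_⟩ <;>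
    simp only [map_add, LinearMap.add_apply, (hxC u u.2).1, (hxC u u.2).2, (hxC v hv).1,
      (hxC v hv).2, hC u u.2, hC v hv, huv, add_zero, zero_add, CharTwo.add_self_eq_zero] <;>
    exact hx

theorem exists_smul_apply_self_eq_one [CharP K 2] [PerfectField K] {x : V} (hx : B x x ≠ 0) :
    ∃ c : K, B (c • x) (c • x) = 1 := by
  obtain ⟨c, hc⟩ := surjective_frobenius K 2 (B x x)⁻¹
  rw [_root_.frobenius_def, sq] at hc
  exact ⟨c, by simp [← mul_assoc, hc, hx]⟩

section PermGram

variable [DecidableEq ι] [DecidableEq κ]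

def HasPermGram (B : BilinForm K V) (σ : Equiv.Perm ι) (v : ι → V) : Prop :=
  ∀ i j, B (v i) (v j) = σ.permMatrix K i j

theorem hasPermGram_iff {σ : Equiv.Perm ι} {v : ι → V} :
    B.HasPermGram σ v ↔ ∀ i j, B (v i) (v j) = if σ i = j then 1 else 0 := by
  simp [HasPermGram, PEquiv.toMatrix_apply]

namespace HasPermGram

variable {σ : Equiv.Perm ι} {τ : Equiv.Perm κ} {v : ι → V}

theorem linearIndependent [Finite ι] (h : B.HasPermGram σ v) : LinearIndependent K v := by
  have := Fintype.ofFinite ι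
  refine LinearIndependent.of_comp (LinearMap.pi fun j => B.flip (v (σ j))) ?_
  have : ⇑(LinearMap.pi fun j => B.flip (v (σ j))) ∘ v = Pi.basisFun K ι := by
    ext i j
    simp [hasPermGram_iff.1 h, Pi.single_apply, eq_comm]
  rw [this]
  exact (Pi.basisFun K ι).linearIndependent

theorem nondegenerate [Fintype ι] {b : Basis ι K V} (h : B.HasPermGram σ b) : B.Nondegenerate :=
  (nondegenerate_iff_det_ne_zero b).2 <| by
    rw [show toMatrix b B = σ.permMatrix K from Matrix.ext fun i j => by rw [toMatrix_apply, h]]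
    rcases Int.units_eq_one_or (Equiv.Perm.sign σ) with hσ | hσ <;> simp [hσ]

theorem nondegenerate_restrict_span [Finite ι] (h : B.HasPermGram σ v) :
    (B.restrict (span K (Set.range v))).Nondegenerate := by
  have := Fintype.ofFinite ι
  refine nondegenerate (σ := σ) (b := Basis.span h.linearIndependent) fun i j => ?_
  simpa [Basis.span_apply] using h i j

theorem reindex {b : Basis ι K V} (h : B.HasPermGram σ b) (e : ι ≃ κ) :
    B.HasPermGram (e.permCongr σ) (b.reindex e) := by
  rw [hasPermGram_iff] at h ⊢
  intro i j
  simp [h, ← Equiv.eq_symm_apply]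

theorem reindex_one {b : Basis ι K V} (h : B.HasPermGram 1 b) (e : ι ≃ κ) :
    B.HasPermGram 1 (b.reindex e) := by
  simpa only [show e.permCongr 1 = 1 from e.permCongr_refl] using h.reindex e

theorem sumElim {w : κ → V} (hv : B.HasPermGram σ v) (hw : B.HasPermGram τ w)
    (hvw : ∀ i k, B (v i) (w k) = 0) (hwv : ∀ k i, B (w k) (v i) = 0) :
    B.HasPermGram (σ.sumCongr τ) (Sum.elim v w) := by
  rw [hasPermGram_iff] at hv hw ⊢
  rintro (i | k) (j | l) <;> simp [hv, hw, hvw, hwv]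

variable [FiniteDimensional K V]

theorem isCompl_span_orthogonal [Finite ι] (hB : B.IsRefl) (h : B.HasPermGram σ v) :
    IsCompl (span K (Set.range v)) (B.orthogonal (span K (Set.range v))) :=
  isCompl_orthogonal_of_restrict_nondegenerate hB h.nondegenerate_restrict_span

theorem nondegenerate_restrict_orthogonal [Finite ι] (hB : B.IsRefl) (hnd : B.Nondegenerate)
    (h : B.HasPermGram σ v) :
    (B.restrict (B.orthogonal (span K (Set.range v)))).Nondegenerate := by
  refine B.nondegenerate_restrict_of_disjoint_orthogonal hB ?_
  rw [orthogonal_orthogonal hnd hB]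
  exact (h.isCompl_span_orthogonal hB).disjoint.symm

theorem finrank_orthogonal_add_card [Fintype ι] (hnd : B.Nondegenerate) (h : B.HasPermGram σ v) :
    finrank K (B.orthogonal (span K (Set.range v))) + Fintype.card ι = finrank K V := by
  rw [finrank_orthogonal hnd, ← finrank_span_eq_card h.linearIndependent]
  have := Submodule.finrank_le (span K (Set.range v))
  omega

theorem exists_basis_sumCongr [Finite ι] (hB : B.IsRefl) (hv : B.HasPermGram σ v)
    {bC : Basis κ K (B.orthogonal (span K (Set.range v)))}
    (hC : (B.restrict (B.orthogonal (span K (Set.range v)))).HasPermGram τ bC) :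
    ∃ b : Basis (ι ⊕ κ) K V, B.HasPermGram (σ.sumCongr τ) b := by
  let b := ((Basis.span hv.linearIndependent).prod bC).map
    (prodEquivOfIsCompl _ _ (hv.isCompl_span_orthogonal hB))
  have hb : ⇑b = Sum.elim v fun k => (bC k : V) := by
    ext (i | k) <;> simp [b, Basis.span_apply]
  refine ⟨b, hb ▸ hv.sumElim (fun k l => hC k l) (fun i k => ?_) (fun k i => hB _ _ ?_)⟩ <;>
    exact (bC k).2 _ (subset_span ⟨i, rfl⟩)

end HasPermGram

theorem exists_linearEquiv_of_hasPermGram {V' : Type*} [AddCommGroup V'] [Module K V']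
    {B' : BilinForm K V'} {σ : Equiv.Perm ι} (b : Basis ι K V) (b' : Basis ι K V')
    (hb : B.HasPermGram σ b) (hb' : B'.HasPermGram σ b') :
    ∃ M : V' ≃ₗ[K] V, ∀ x y, B' x y = B (M x) (M y) := by
  refine ⟨b'.equiv b (.refl ι), fun x y => ?_⟩
  have : B' = B.compl₁₂ (b'.equiv b (.refl ι) : V' →ₗ[K] V) (b'.equiv b (.refl ι)) :=
    ext_basis b' fun i j => by simp [hb i j, hb' i j]
  rw [this]
  rfl

theorem exists_isSymm_nondegenerate_hasPermGram [Fintype ι] (b : Basis ι K V)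
    {σ : Equiv.Perm ι} (hσ : Function.Involutive σ) :
    ∃ B : BilinForm K V, B.IsSymm ∧ B.Nondegenerate ∧ B.HasPermGram σ b := by
  have hB : (Matrix.toBilin b (σ.permMatrix K)).HasPermGram σ b := fun i j => by
    rw [← toMatrix_apply, toMatrix_toBilin]
  refine ⟨_, (isSymm_iff_basis b).2 fun i j => ?_, hB.nondegenerate, hB⟩
  rw [hasPermGram_iff.1 hB, hasPermGram_iff.1 hB]
  exact if_congr (hσ.eq_iff.trans eq_comm) rfl rfl

end PermGram

variable [FiniteDimensional K V]

theorem exists_basis_hasPermGram_sumComm (hB : B.IsSymm) (hnd : B.Nondegenerate) (hA : B.IsAlt) :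
    ∃ (m : ℕ) (b : Basis (Fin m ⊕ Fin m) K V), B.HasPermGram (Equiv.sumComm _ _) b := by
  induction h : finrank K V using Nat.strong_induction_on generalizing V with
  | _ n ih =>
  rcases subsingleton_or_nontrivial V with hV | hV
  · exact ⟨0, Basis.empty V, fun i => isEmptyElim i⟩
  obtain ⟨x, y, hxy⟩ := exists_apply_eq_one hnd
  have hv : B.HasPermGram (Equiv.sumComm Unit Unit) (Sum.elim (fun _ => x) (fun _ => y)) := by
    rw [hasPermGram_iff]
    rintro (_ | _) (_ | _) <;> simp [hA.self_eq_zero, hxy, hB.eq y x]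
  have hC := hv.finrank_orthogonal_add_card hnd
  simp only [Fintype.card_sum, Fintype.card_unit] at hC
  obtain ⟨m, bC, hbC⟩ := ih _ (by omega) (hB.restrict _)
    (hv.nondegenerate_restrict_orthogonal hB.isRefl hnd) (fun z => hA z) rfl
  obtain ⟨b, hb⟩ := hv.exists_basis_sumCongr hB.isRefl hbC
  let e : Unit ⊕ Fin m ≃ Fin (m + 1) := Fintype.equivFinOfCardEq (by simp [add_comm])
  have := hb.reindex ((Equiv.sumSumSumComm _ _ _ _).trans (e.sumCongr e))
  rw [Equiv.permCongr_sumSumSumComm_sumCongr] at this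
  exact ⟨m + 1, _, this⟩

theorem exists_basis_hasPermGram_one [CharP K 2] [PerfectField K] (hB : B.IsSymm)
    (hnd : B.Nondegenerate) {x : V} (hx : B x x ≠ 0) :
    ∃ b : Basis (Fin (finrank K V)) K V, B.HasPermGram 1 b := by
  induction h : finrank K V generalizing V with
  | zero =>
    exact absurd h (Module.finrank_pos_iff_exists_ne_zero.2 ⟨x, by rintro rfl; simp at hx⟩).ne'
  | succ n ih =>
  obtain ⟨e, hee, he⟩ :
      ∃ e, B e e = 1 ∧ (n ≠ 0 → ∃ y, B e y = 0 ∧ B y y ≠ 0) := by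
    rcases eq_or_ne n 0 with rfl | hn
    · obtain ⟨c, hc⟩ := exists_smul_apply_self_eq_one hx
      exact ⟨c • x, hc, fun h => absurd rfl h⟩
    obtain ⟨e, y, he, hey, hy⟩ := exists_orthogonal_anisotropic_pair hB hnd (by omega) hx
    obtain ⟨c, hc⟩ := exists_smul_apply_self_eq_one he
    exact ⟨c • e, hc, fun _ => ⟨y, by simp [hey], hy⟩⟩
  have hv : B.HasPermGram (1 : Equiv.Perm Unit) (fun _ => e) := by simp [hasPermGram_iff, hee]
  have hC := hv.finrank_orthogonal_add_card hnd
  rw [Fintype.card_unit, h, Nat.add_right_cancel_iff] at hC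
  set C := B.orthogonal (span K (Set.range fun _ : Unit => e))
  obtain ⟨bC, hbC⟩ :
      ∃ bC : Basis (Fin (finrank K C)) K C, (B.restrict C).HasPermGram 1 bC := by
    rcases eq_or_ne n 0 with hn | hn
    · exact ⟨finBasis K C, fun i => absurd i.2 (by omega)⟩
    obtain ⟨y, hey, hy⟩ := he hn
    rw [hC]
    exact ih (hB.restrict C) (hv.nondegenerate_restrict_orthogonal hB.isRefl hnd)
      (x := ⟨y, mem_orthogonal_span_range_iff.2 fun _ => hey⟩) hy hC
  obtain ⟨b, hb⟩ := hv.exists_basis_sumCongr hB.isRefl hbC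
  let f : Unit ⊕ Fin (finrank K C) ≃ Fin (n + 1) :=
    Fintype.equivFinOfCardEq (by simp [hC, add_comm])
  rw [Equiv.Perm.sumCongr_one] at hb
  exact ⟨_, hb.reindex_one f⟩

section Classification

variable {V' : Type*} [AddCommGroup V'] [Module K V'] [FiniteDimensional K V']
  {B' : BilinForm K V'}

theorem exists_linearEquiv_of_isAlt (hV : finrank K V = finrank K V') (hB : B.IsSymm)
    (hB' : B'.IsSymm) (hnd : B.Nondegenerate) (hnd' : B'.Nondegenerate) (hA : B.IsAlt)
    (hA' : B'.IsAlt) : ∃ M : V' ≃ₗ[K] V, ∀ x y, B' x y = B (M x) (M y) := by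
  obtain ⟨m, b, hb⟩ := exists_basis_hasPermGram_sumComm hB hnd hA
  obtain ⟨m', b', hb'⟩ := exists_basis_hasPermGram_sumComm hB' hnd' hA'
  obtain rfl : m = m' := by
    rw [finrank_eq_card_basis b, finrank_eq_card_basis b'] at hV
    simp only [Fintype.card_sum, Fintype.card_fin] at hV
    omega
  exact exists_linearEquiv_of_hasPermGram b b' hb hb'

theorem exists_linearEquiv_of_apply_self_ne_zero [CharP K 2] [PerfectField K]
    (hV : finrank K V = finrank K V') (hB : B.IsSymm) (hB' : B'.IsSymm) (hnd : B.Nondegenerate)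
    (hnd' : B'.Nondegenerate) {x : V} (hx : B x x ≠ 0) {x' : V'} (hx' : B' x' x' ≠ 0) :
    ∃ M : V' ≃ₗ[K] V, ∀ x y, B' x y = B (M x) (M y) := by
  obtain ⟨b, hb⟩ := exists_basis_hasPermGram_one hB hnd hx
  obtain ⟨b', hb'⟩ := exists_basis_hasPermGram_one hB' hnd' hx'
  exact exists_linearEquiv_of_hasPermGram _ b' (hb.reindex_one (finCongr hV)) hb'

end Classification

theorem exists_isSymm_nondegenerate_not_isAlt (hV : 0 < finrank K V) :
    ∃ B : BilinForm K V, B.IsSymm ∧ B.Nondegenerate ∧ ∃ x, B x x ≠ 0 := by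
  obtain ⟨B, hB, hnd, hb⟩ :=
    exists_isSymm_nondegenerate_hasPermGram (finBasis K V) (σ := 1) fun _ => rfl
  exact ⟨B, hB, hnd, finBasis K V ⟨0, hV⟩, by simp [hasPermGram_iff.1 hb]⟩

theorem exists_isSymm_nondegenerate_isAlt [CharP K 2] {m : ℕ} (hV : finrank K V = m + m) :
    ∃ B : BilinForm K V, B.IsSymm ∧ B.Nondegenerate ∧ B.IsAlt := by
  let b := (finBasis K V).reindex ((finCongr hV).trans finSumFinEquiv.symm)
  obtain ⟨B, hB, hnd, hb⟩ :=
    exists_isSymm_nondegenerate_hasPermGram b (σ := Equiv.sumComm _ _) Sum.swap_swap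
  exact ⟨B, hB, hnd, hB.isAlt_of_basis b fun k => by cases k <;> simp [hasPermGram_iff.1 hb]⟩

end LinearMap.BilinForm

/-- Over a perfect field of characteristic 2, on an even-dimensional vector space,
there are exactly two equivalence classes of non-degenerate symmetric bilinear forms:
two such forms are equivalent iff they agree on the property of having identically zero
diagonal (i.e. `B x x = 0` for all `x`), and both classes are nonempty: one contains a
form with some nonzero "diagonal" value (e.g. the one with Gram matrix `1ₙ`), and the
other a form with identically zero diagonal. -/
theorem even_dim_two_classes_nondeg_symm_bilin
    (K V : Type*) [Field K] [PerfectField K] [CharP K 2]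
    [AddCommGroup V] [Module K V] [FiniteDimensional K V]
    (n : ℕ) (hn : Even n) (hpos : 0 < n) (hdim : Module.finrank K V = n) :
    (∀ B B' : LinearMap.BilinForm K V,
      B.IsSymm → B'.IsSymm → B.Nondegenerate → B'.Nondegenerate →
      ((∃ M : V ≃ₗ[K] V, ∀ x y : V, B' x y = B (M x) (M y)) ↔
        ((∀ x : V, B x x = 0) ↔ (∀ x : V, B' x x = 0)))) ∧
    (∃ B : LinearMap.BilinForm K V, B.IsSymm ∧ B.Nondegenerate ∧ ∃ x : V, B x x ≠ 0) ∧
    (∃ B : LinearMap.BilinForm K V, B.IsSymm ∧ B.Nondegenerate ∧ ∀ x : V, B x x = 0) := by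
  open LinearMap.BilinForm in
  obtain ⟨m, rfl⟩ := hn
  refine ⟨fun B B' hB hB' hnd hnd' => ⟨?_, fun hiff => ?_⟩,
    exists_isSymm_nondegenerate_not_isAlt (by omega), exists_isSymm_nondegenerate_isAlt hdim⟩
  · rintro ⟨M, hM⟩
    simp only [hM]
    exact M.surjective.forall
  · by_cases hA : ∀ x, B x x = 0
    · exact exists_linearEquiv_of_isAlt rfl hB hB' hnd hnd' hA (hiff.1 hA)
    · obtain ⟨x, hx⟩ := not_forall.1 hA
      obtain ⟨x', hx'⟩ := not_forall.1 (mt hiff.2 hA)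
      exact exists_linearEquiv_of_apply_self_ne_zero rfl hB hB' hnd hnd' hx hx'
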